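/- Let K = (V, 2^V) be the full (n−1)-dimensional simplex on a vertex set V with n elements, and let 0 ≤ q ≤ n − 2. Then the restriction of D_q^up to C^q(K,ℂ) has exactly two eigenvalues: 1/(n−q−1) with multiplicity binom(n−1, q+1), and −1/(q+1) with multiplicity binom(n−1, q). -/

import Mathlib

open scoped BigOperators Classical

/-- The set of oriented `q`-simplices of the full `(n−1)`-dimensional simplex on the
vertex set `Fin n`: a `(q+1)`-element vertex set together with one of its two
orientations (`true` denoting the orientation given by the increasing ordering of the
vertices). -/
abbrev FullOSimp (n q : ℕ) : Type := {A : Finset (Fin n) // A.card = q + 1} × Bool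

/-- The orientation reversal `τ ↦ τ̄`. -/
def fbar {n q : ℕ} (τ : FullOSimp n q) : FullOSimp n q := (τ.1, !τ.2)

/-- The sign of an orientation. -/
def bsgn (b : Bool) : ℝ := if b then 1 else -1

/-- The position of the vertex removed from `B` to get `A` (for `A ⊆ B` with one
element removed), in the increasing enumeration of `B`. -/
def remIdx {n : ℕ} (B A : Finset (Fin n)) : ℕ :=
  ∑ a ∈ B \ A, (B.filter (fun b => b < a)).card

/-- The incidence sign `sgn(σ,τ)`: for `σ = ⟨a_0 ⋯ a_{q+1}⟩` (increasing) and
`τ = ⟨a_0 ⋯ â_j ⋯ a_{q+1}⟩` it is `(−1)^j`, extended to both orientations by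
`sgn(σ̄,τ) = sgn(σ,τ̄) = −sgn(σ,τ)`, and `0` if `[τ]` is not a face of `[σ]`. -/
noncomputable def fsgn {n q : ℕ} (σ : FullOSimp n (q + 1)) (τ : FullOSimp n q) : ℝ :=
  if τ.1.1 ⊆ σ.1.1 then (-1 : ℝ) ^ (remIdx σ.1.1 τ.1.1) * bsgn σ.2 * bsgn τ.2 else 0

/-- `deg_X(τ)`: the number of `(q+1)`-dimensional simplices containing `[τ]` as a face. -/
noncomputable def fdegX (n q : ℕ) (τ : FullOSimp n q) : ℕ :=
  (Finset.univ.filter (fun B : Finset (Fin n) => B.card = q + 2 ∧ τ.1.1 ⊆ B)).card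

/-- `η^up(τ₁,τ₂) = sgn(σ,τ₁)·sgn(σ,τ₂)` where `σ` is (either orientation of) the unique
`(q+1)`-simplex containing the up neighbors `[τ₁] ≠ [τ₂]`, and `0` otherwise. -/
noncomputable def fetaUp {n q : ℕ} (τ₁ τ₂ : FullOSimp n q) : ℝ :=
  if h : τ₁.1.1 ≠ τ₂.1.1 ∧ (τ₁.1.1 ∪ τ₂.1.1).card = q + 1 + 1 then
    fsgn (⟨⟨τ₁.1.1 ∪ τ₂.1.1, h.2⟩, true⟩ : FullOSimp n (q + 1)) τ₁ *
      fsgn (⟨⟨τ₁.1.1 ∪ τ₂.1.1, h.2⟩, true⟩ : FullOSimp n (q + 1)) τ₂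
  else 0

/-- The normalization constant `(2(q+1) deg_X τ)^{-1/2}`. -/
noncomputable def fc (n q : ℕ) (τ : FullOSimp n q) : ℂ :=
  ((Real.sqrt (2 * (q + 1) * fdegX n q τ) : ℝ) : ℂ)⁻¹

/-- The matrix of `d_{X_q} : ℓ²(E(X_q)) → ℓ²(K_q)`. -/
noncomputable def fdM (n q : ℕ) : Matrix (FullOSimp n q) (FullOSimp n q × FullOSimp n q) ℂ :=
  fun τ p => if p.1 = τ ∧ fetaUp p.1 p.2 ≠ 0 then fc n q τ else 0

/-- The matrix of `d_{X_q}* : ℓ²(K_q) → ℓ²(E(X_q))`. -/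
noncomputable def fdstarM (n q : ℕ) : Matrix (FullOSimp n q × FullOSimp n q) (FullOSimp n q) ℂ :=
  fun p τ => if p.1 = τ ∧ fetaUp p.1 p.2 ≠ 0 then fc n q τ else 0

/-- The matrix of the shift `(S^up g)(τ₁,τ₂) = η^up(τ₁,τ₂) g(τ₂,τ₁)`. -/
noncomputable def fshiftM (n q : ℕ) :
    Matrix (FullOSimp n q × FullOSimp n q) (FullOSimp n q × FullOSimp n q) ℂ :=
  fun p p' => if p'.1 = p.2 ∧ p'.2 = p.1 then (fetaUp p.1 p.2 : ℂ) else 0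

/-- The up discriminant `D_q^up = d_{X_q} S^up d_{X_q}*` of the full simplex. -/
noncomputable def fdiscM (n q : ℕ) : Matrix (FullOSimp n q) (FullOSimp n q) ℂ :=
  fdM n q * fshiftM n q * fdstarM n q

/-- The cochain space `C^q(K,ℂ) = {f : f(τ̄) = −f(τ)}`. -/
noncomputable def fCSub (n q : ℕ) : Submodule ℂ (FullOSimp n q → ℂ) where
  carrier := {f | ∀ τ, f (fbar τ) = - f τ}
  add_mem' := by
    intro a b ha hb τ
    simp only [Pi.add_apply, ha τ, hb τ]; ring
  zero_mem' := by intro τ; simp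
  smul_mem' := by
    intro c f hf τ
    simp only [Pi.smul_apply, hf τ, smul_eq_mul]; ring

/-- The eigenspace of the restriction of `D_q^up` to `C^q(K,ℂ)` at `μ`. -/
noncomputable def fEig (n q : ℕ) (μ : ℂ) : Submodule ℂ (FullOSimp n q → ℂ) :=
  Module.End.eigenspace (Matrix.mulVecLin (fdiscM n q)) μ ⊓ fCSub n q

/-!
Write a `q`-cochain as `τ ↦ ±g [τ]` with `g` a function on unoriented faces. On such cochains
`D_q^up` acts as `κ • M`, where `κ = ((q+1)(n-q-1))⁻¹` and `M` is the signed up-adjacency matrix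
of `q`-faces. For the coboundary `δ` of the full simplex, `δᵀδ = M + (n-q-1)`, and since
`δδᵀ + δᵀδ = n` in every degree while `δδ = 0`, the up Laplacian satisfies `(δᵀδ)² = n δᵀδ`.
So `(M - (q+1))(M + (n-q-1)) = 0`: the eigenvalues of `κ • M` lie in `{1/(n-q-1), -1/(q+1)}`,
and their multiplicities are fixed by their sum `C(n, q+1)` and by `tr M = 0`.
-/

section Eigenspace
variable {K V : Type*} [Field K] [AddCommGroup V] [Module K V] {T : Module.End K V} {a b : K}

open Module.End

lemma sub_smul_one_mul_comm :
    (T - a • 1) * (T - b • 1) = (T - b • 1) * (T - a • 1) := by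
  simp only [sub_mul, mul_sub, smul_mul_assoc, mul_smul_comm, one_mul, mul_one]
  module

lemma eq_or_eq_of_eigenspace_ne_bot (hT : (T - a • 1) * (T - b • 1) = 0) {μ : K}
    (hμ : eigenspace T μ ≠ ⊥) : μ = a ∨ μ = b := by
  obtain ⟨x, hx, hx0⟩ := Submodule.exists_mem_ne_zero_of_ne_bot hμ
  rw [mem_eigenspace_iff] at hx
  have h : ((μ - a) * (μ - b)) • x = 0 := by
    have := LinearMap.congr_fun hT x
    simp only [mul_apply, LinearMap.sub_apply, LinearMap.smul_apply, one_apply, hx, map_sub,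
      map_smul, LinearMap.zero_apply] at this
    rw [← this]
    module
  rcases mul_eq_zero.mp ((smul_eq_zero.mp h).resolve_right hx0) with h | h
  · exact Or.inl (sub_eq_zero.mp h)
  · exact Or.inr (sub_eq_zero.mp h)

lemma eigenspace_eq_range_of_quadratic (hab : a ≠ b) (hT : (T - a • 1) * (T - b • 1) = 0) :
    eigenspace T a = LinearMap.range ((a - b)⁻¹ • (T - b • 1)) := by
  ext x
  rw [mem_eigenspace_iff]
  constructor
  · intro hx
    refine ⟨x, ?_⟩
    simp only [LinearMap.smul_apply, LinearMap.sub_apply, one_apply, hx, ← sub_smul, smul_smul,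
      inv_mul_cancel₀ (sub_ne_zero.mpr hab), one_smul]
  · rintro ⟨y, rfl⟩
    have := LinearMap.congr_fun hT y
    simp only [mul_apply, LinearMap.sub_apply, LinearMap.smul_apply, one_apply,
      LinearMap.zero_apply, sub_eq_zero] at this
    simp only [LinearMap.smul_apply, LinearMap.sub_apply, one_apply, map_smul, this]
    exact smul_comm _ _ _

/-- `(a - b)⁻¹ • (T - b)` is a projection onto the `a`-eigenspace, so the dimension of that
eigenspace is the trace of the projection. -/
lemma finrank_eigenspace_of_quadratic [FiniteDimensional K V] [CharZero K] (hab : a ≠ b)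
    (hT : (T - a • 1) * (T - b • 1) = 0) {m m' : ℕ} (hdim : m + m' = Module.finrank K V)
    (htr : LinearMap.trace K V T = a * m + b * m') :
    Module.finrank K (eigenspace T a) = m := by
  have hab' : a - b ≠ 0 := sub_ne_zero.mpr hab
  set P := (a - b)⁻¹ • (T - b • 1)
  have hsq : (T - b • 1) * (T - b • 1) = (a - b) • (T - b • 1) := by
    have h : (T - b • 1) * (T - b • 1) - (T - a • 1) * (T - b • 1) = (a - b) • (T - b • 1) := by
      rw [← sub_mul, sub_sub_sub_cancel_left, ← sub_smul, smul_mul_assoc, one_mul]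
    rwa [hT, sub_zero] at h
  have hP : IsIdempotentElem P := by
    rw [IsIdempotentElem, smul_mul_smul_comm, hsq, smul_smul, mul_assoc, inv_mul_cancel₀ hab',
      mul_one]
  have htrP : LinearMap.trace K V P = m := by
    rw [map_smul, map_sub, map_smul, LinearMap.trace_one, htr, ← hdim, smul_eq_mul, smul_eq_mul]
    push_cast
    field_simp
    ring
  rw [eigenspace_eq_range_of_quadratic hab hT]
  exact_mod_cast (LinearMap.IsIdempotentElem.isProj_range P hP).trace.symm.trans htrP

lemma eigenspace_inf_range_eq_map {W : Type*} [AddCommGroup W] [Module K W]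
    {S : Module.End K W} {φ : V →ₗ[K] W} (hφ : Function.Injective φ) (h : S ∘ₗ φ = φ ∘ₗ T)
    (μ : K) : eigenspace S μ ⊓ LinearMap.range φ = (eigenspace T μ).map φ := by
  ext y
  simp only [Submodule.mem_inf, mem_eigenspace_iff, LinearMap.mem_range, Submodule.mem_map]
  constructor
  · rintro ⟨hy, x, rfl⟩
    refine ⟨x, hφ ?_, rfl⟩
    rw [← LinearMap.comp_apply φ T, ← h, LinearMap.comp_apply, hy, map_smul]
  · rintro ⟨x, hx, rfl⟩
    exact ⟨by rw [← LinearMap.comp_apply, h, LinearMap.comp_apply, hx, map_smul], x, rfl⟩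

end Eigenspace

open Finset Matrix

section Faces
variable {n : ℕ}

lemma sum_faces_ite_eq_sum_filter (m : ℕ) (p : Finset (Fin n) → Prop) [DecidablePred p]
    (g : Finset (Fin n) → ℂ) :
    ∑ B : {B : Finset (Fin n) // B.card = m}, (if p B.1 then g B.1 else 0)
      = ∑ B ∈ univ.filter (fun B : Finset (Fin n) => B.card = m ∧ p B), g B := by
  rw [← filter_filter, sum_filter]
  exact (sum_subtype _ (by simp) (fun B => if p B then g B else 0)).symm

lemma sum_faces_between {k : ℕ} {A C : Finset (Fin n)} (hA : A.card = k) (hAC : A ⊆ C)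
    (g : Finset (Fin n) → ℂ) :
    ∑ B : {B : Finset (Fin n) // B.card = k + 1}, (if A ⊆ B.1 ∧ B.1 ⊆ C then g B.1 else 0)
      = ∑ x ∈ C \ A, g (insert x A) := by
  rw [sum_faces_ite_eq_sum_filter (k + 1) (fun B => A ⊆ B ∧ B ⊆ C)]
  have himage : univ.filter (fun B : Finset (Fin n) => B.card = k + 1 ∧ A ⊆ B ∧ B ⊆ C)
      = (C \ A).image (insert · A) := by
    ext B
    simp only [mem_filter, mem_univ, true_and, mem_image, mem_sdiff]
    constructor
    · rintro ⟨hB, hAB, hBC⟩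
      obtain ⟨x, hx, rfl⟩ := exists_eq_insert_iff.mpr ⟨hAB, by omega⟩
      exact ⟨x, ⟨hBC (mem_insert_self x A), hx⟩, rfl⟩
    · rintro ⟨x, ⟨hxC, hxA⟩, rfl⟩
      exact ⟨by rw [card_insert_of_notMem hxA, hA], subset_insert x A, insert_subset hxC hAC⟩
  rw [himage, sum_image]
  intro x hx y _ hxy
  exact (insert_inj (mem_sdiff.mp hx).2).mp hxy

lemma sum_faces_supset_pair {m : ℕ} {S S' : Finset (Fin n)} (hm : m ≤ (S ∪ S').card)
    (g : Finset (Fin n) → ℂ) :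
    ∑ B : {B : Finset (Fin n) // B.card = m}, (if S ⊆ B.1 ∧ S' ⊆ B.1 then g B.1 else 0)
      = if (S ∪ S').card = m then g (S ∪ S') else 0 := by
  split_ifs with h
  · rw [Fintype.sum_eq_single ⟨S ∪ S', h⟩ fun B hB => if_neg fun hSB => hB (Subtype.ext
      (eq_of_subset_of_card_le (union_subset hSB.1 hSB.2) (by rw [B.2]; exact hm)).symm)]
    simp
  · exact Fintype.sum_eq_zero _ fun B => if_neg fun hSB =>
      h (le_antisymm (B.2 ▸ card_le_card (union_subset hSB.1 hSB.2)) hm)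

lemma sum_faces_subset_pair {m : ℕ} {S S' : Finset (Fin n)} (hm : (S ∩ S').card ≤ m)
    (g : Finset (Fin n) → ℂ) :
    ∑ A : {A : Finset (Fin n) // A.card = m}, (if A.1 ⊆ S ∧ A.1 ⊆ S' then g A.1 else 0)
      = if (S ∩ S').card = m then g (S ∩ S') else 0 := by
  split_ifs with h
  · rw [Fintype.sum_eq_single ⟨S ∩ S', h⟩ fun A hA => if_neg fun hAS => hA (Subtype.ext
      (eq_of_subset_of_card_le (subset_inter hAS.1 hAS.2) (by rw [A.2]; exact hm)))]
    simp
  · exact Fintype.sum_eq_zero _ fun A => if_neg fun hAS =>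
      h (le_antisymm hm (A.2 ▸ card_le_card (subset_inter hAS.1 hAS.2)))

lemma sum_faces_supset_one (k : ℕ) {A : Finset (Fin n)} (hA : A.card = k) :
    ∑ B : {B : Finset (Fin n) // B.card = k + 1}, (if A ⊆ B.1 then (1 : ℂ) else 0) = n - k := by
  have := sum_faces_between hA (subset_univ A) (fun _ => 1)
  simp only [subset_univ, and_true] at this
  rw [this, sum_const, ← compl_eq_univ_sdiff, card_compl, Fintype.card_fin, hA, nsmul_eq_mul,
    mul_one, Nat.cast_sub (hA ▸ card_le_univ A |>.trans_eq (Fintype.card_fin n))]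

lemma sum_faces_subset_one (k : ℕ) {B : Finset (Fin n)} (hB : B.card = k + 1) :
    ∑ A : {A : Finset (Fin n) // A.card = k}, (if A.1 ⊆ B then (1 : ℂ) else 0) = k + 1 := by
  rw [sum_faces_ite_eq_sum_filter k (· ⊆ B) (fun _ => 1), sum_const, nsmul_eq_mul, mul_one]
  have : univ.filter (fun A : Finset (Fin n) => A.card = k ∧ A ⊆ B) = B.powersetCard k := by
    ext A; simp [mem_powersetCard, and_comm]
  rw [this, card_powersetCard, hB, Nat.choose_succ_self_right]
  push_cast
  ring

lemma card_inter_lt_of_ne {m : ℕ} {B B' : Finset (Fin n)} (hB : B.card = m) (hB' : B'.card = m)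
    (hne : B ≠ B') : (B ∩ B').card < m := by
  refine hB ▸ card_lt_card (ssubset_of_subset_of_ne inter_subset_left fun h => hne ?_)
  exact eq_of_subset_of_card_le (inter_eq_left.mp h) (by rw [hB, hB'])

end Faces

section Coboundary
variable {n : ℕ}

noncomputable def incSign (B A : Finset (Fin n)) : ℂ := (-1) ^ remIdx B A

lemma incSign_mul_self (B A : Finset (Fin n)) : incSign B A * incSign B A = 1 := by
  rw [incSign, ← pow_add, ← two_mul, pow_mul]
  simp

lemma remIdx_insert {A : Finset (Fin n)} {x : Fin n} (hx : x ∉ A) :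
    remIdx (insert x A) A = #{b ∈ A | b < x} := by
  rw [remIdx, insert_sdiff_cancel hx, sum_singleton, filter_insert, if_neg (lt_irrefl x)]

lemma remIdx_insert_insert {A : Finset (Fin n)} {x y : Fin n} (hx : x ∉ A) (hy : y ∉ A)
    (hxy : x ≠ y) :
    remIdx (insert x (insert y A)) (insert y A) = #{b ∈ A | b < x} + if y < x then 1 else 0 := by
  rw [remIdx_insert (by simp [hx, hxy]), filter_insert]
  split_ifs with h
  · rw [card_insert_of_notMem (by simp [hy]), add_comm]
  · rfl

lemma incSign_insert_insert {A : Finset (Fin n)} {x y : Fin n} (hx : x ∉ A) (hy : y ∉ A)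
    (hxy : x ≠ y) :
    incSign (insert x (insert y A)) (insert y A) * incSign (insert y A) A
      = -(incSign (insert y (insert x A)) (insert x A) * incSign (insert x A) A) := by
  simp only [incSign, remIdx_insert_insert hx hy hxy, remIdx_insert_insert hy hx hxy.symm,
    remIdx_insert hx, remIdx_insert hy, ← pow_add]
  rcases hxy.lt_or_gt with h | h <;> simp only [h, h.not_gt, if_true, if_false, add_zero] <;> ring

lemma incSign_adjacent {A : Finset (Fin n)} {x y : Fin n} (hx : x ∉ A) (hy : y ∉ A)
    (hxy : x ≠ y) :
    incSign (insert x A) A * incSign (insert y A) A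
      + incSign (insert x (insert y A)) (insert x A)
        * incSign (insert x (insert y A)) (insert y A) = 0 := by
  have key := incSign_insert_insert hx hy hxy
  rw [insert_comm y x A] at key
  set s₁ := incSign (insert x A) A
  set s₂ := incSign (insert y A) A
  set c₁ := incSign (insert x (insert y A)) (insert x A)
  set c₂ := incSign (insert x (insert y A)) (insert y A)
  linear_combination c₁ * s₂ * key - c₁ * c₂ * incSign_mul_self (insert y A) A
    - s₁ * s₂ * incSign_mul_self (insert x (insert y A)) (insert x A)

/-- `δ : C^{k-1} → C^k` (a `k`-set is a `(k-1)`-face), faces being oriented by the increasing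
order of their vertices. -/
noncomputable def coboundary (n k : ℕ) :
    Matrix {B : Finset (Fin n) // B.card = k + 1} {A : Finset (Fin n) // A.card = k} ℂ :=
  fun B A => if A.1 ⊆ B.1 then incSign B.1 A.1 else 0

noncomputable def upLaplacian (n k : ℕ) :
    Matrix {A : Finset (Fin n) // A.card = k} {A : Finset (Fin n) // A.card = k} ℂ :=
  (coboundary n k)ᵀ * coboundary n k

noncomputable def upAdj (n k : ℕ) :
    Matrix {A : Finset (Fin n) // A.card = k} {A : Finset (Fin n) // A.card = k} ℂ :=
  fun A A' => if A.1 ≠ A'.1 ∧ (A.1 ∪ A'.1).card = k + 1 then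
    incSign (A.1 ∪ A'.1) A.1 * incSign (A.1 ∪ A'.1) A'.1 else 0

lemma coboundary_mul_coboundary (n k : ℕ) : coboundary n (k + 1) * coboundary n k = 0 := by
  ext C A
  simp only [Matrix.mul_apply, coboundary, ite_zero_mul_ite_zero, Matrix.zero_apply]
  by_cases hAC : A.1 ⊆ C.1
  · simp_rw [and_comm (a := _ ⊆ C.1)]
    rw [sum_faces_between A.2 hAC (fun B => incSign C.1 B * incSign B A.1)]
    obtain ⟨x, y, hxy, hCA⟩ := card_eq_two.mp
      (show (C.1 \ A.1).card = 2 by rw [card_sdiff_of_subset hAC, C.2, A.2]; omega)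
    have hx : x ∉ A.1 := (mem_sdiff.mp (hCA ▸ mem_insert_self x {y})).2
    have hy : y ∉ A.1 := (mem_sdiff.mp (hCA ▸ mem_insert_of_mem (mem_singleton_self y))).2
    have hC : C.1 = insert y (insert x A.1) := by
      rw [← union_sdiff_of_subset hAC, hCA]
      ext
      simp only [union_insert, union_singleton, mem_insert]
      tauto
    rw [hCA, sum_pair hxy, hC, incSign_insert_insert hy hx hxy.symm, insert_comm, neg_add_cancel]
  · exact Fintype.sum_eq_zero _ fun B => if_neg fun h => hAC (h.2.trans h.1)

lemma coboundary_mul_transpose_add_upLaplacian (n k : ℕ) :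
    coboundary n k * (coboundary n k)ᵀ + upLaplacian n (k + 1) = (n : ℂ) • 1 := by
  ext B B'
  simp only [upLaplacian, Matrix.add_apply, Matrix.mul_apply, Matrix.transpose_apply, coboundary,
    ite_zero_mul_ite_zero, Matrix.smul_apply, Matrix.one_apply, smul_eq_mul]
  rcases eq_or_ne B B' with rfl | hne
  · simp only [and_self, incSign_mul_self, sum_faces_subset_one k B.2,
      sum_faces_supset_one (k + 1) B.2, if_true]
    push_cast [Nat.cast_sub (B.2 ▸ card_le_univ B.1 |>.trans_eq (Fintype.card_fin n))]
    ring
  · have hne' : B.1 ≠ B'.1 := fun h => hne (Subtype.ext h)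
    have hinter := card_inter_lt_of_ne B.2 B'.2 hne'
    have hunion := card_union_add_card_inter B.1 B'.1
    simp only [if_neg hne, mul_zero]
    rw [sum_faces_subset_pair (by omega : (B.1 ∩ B'.1).card ≤ k)
        (fun A => incSign B.1 A * incSign B'.1 A),
      sum_faces_supset_pair (by omega : k + 1 + 1 ≤ (B.1 ∪ B'.1).card)
        (fun C => incSign C B.1 * incSign C B'.1)]
    by_cases hadj : (B.1 ∩ B'.1).card = k
    · rw [if_pos hadj, if_pos (by omega)]
      obtain ⟨x, hx, hBx⟩ := (exists_eq_insert_iff (s := B.1 ∩ B'.1) (t := B.1)).mpr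
        ⟨inter_subset_left, by rw [hadj, B.2]⟩
      obtain ⟨y, hy, hBy⟩ := (exists_eq_insert_iff (s := B.1 ∩ B'.1) (t := B'.1)).mpr
        ⟨inter_subset_right, by rw [hadj, B'.2]⟩
      have hxy : x ≠ y := by rintro rfl; exact hne' (hBx.symm.trans hBy)
      generalize B.1 ∩ B'.1 = A at *
      have hU : B.1 ∪ B'.1 = insert x (insert y A) := by
        rw [← hBx, ← hBy]
        ext
        simp only [union_insert, insert_union, union_idempotent, mem_insert]
        tauto
      rw [hU, ← hBx, ← hBy]
      exact incSign_adjacent hx hy hxy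
    · rw [if_neg hadj, if_neg (by omega), add_zero]

lemma upLaplacian_eq (n k : ℕ) : upLaplacian n k = upAdj n k + ((n : ℂ) - k) • 1 := by
  ext A A'
  simp only [upLaplacian, Matrix.add_apply, Matrix.mul_apply, Matrix.transpose_apply,
    coboundary, ite_zero_mul_ite_zero, Matrix.smul_apply, Matrix.one_apply, smul_eq_mul, upAdj]
  rcases eq_or_ne A A' with rfl | hne
  · simp [incSign_mul_self, sum_faces_supset_one k A.2]
  · have hne' : A.1 ≠ A'.1 := fun h => hne (Subtype.ext h)
    have hinter := card_inter_lt_of_ne A.2 A'.2 hne'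
    have hunion := card_union_add_card_inter A.1 A'.1
    simp only [if_neg hne, mul_zero, add_zero, hne', ne_eq, not_false_eq_true, true_and]
    exact sum_faces_supset_pair (by omega : k + 1 ≤ (A.1 ∪ A'.1).card)
      (fun B => incSign B A.1 * incSign B A'.1)

lemma upLaplacian_mul_self (n k : ℕ) :
    upLaplacian n k * upLaplacian n k = (n : ℂ) • upLaplacian n k := by
  rw [upLaplacian]
  set δ := coboundary n k
  set δ' := coboundary n (k + 1)
  have hδδ' : δ * δᵀ = (n : ℂ) • 1 - δ'ᵀ * δ' :=
    eq_sub_of_add_eq (coboundary_mul_transpose_add_upLaplacian n k)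
  calc δᵀ * δ * (δᵀ * δ) = δᵀ * (δ * δᵀ) * δ := by simp only [Matrix.mul_assoc]
    _ = (n : ℂ) • (δᵀ * δ) - δᵀ * δ'ᵀ * (δ' * δ) := by
      rw [hδδ', Matrix.mul_sub, Matrix.sub_mul, Matrix.mul_smul, Matrix.smul_mul]
      simp only [Matrix.mul_one, Matrix.mul_assoc]
    _ = (n : ℂ) • (δᵀ * δ) := by
      rw [coboundary_mul_coboundary, Matrix.mul_zero, sub_zero]

lemma upAdj_quadratic (n k : ℕ) :
    (upAdj n k - (k : ℂ) • 1) * (upAdj n k + ((n : ℂ) - k) • 1) = 0 := by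
  have hL := upLaplacian_eq n k
  have hU : upAdj n k - (k : ℂ) • 1 = upLaplacian n k - (n : ℂ) • 1 := by
    rw [hL]; module
  rw [hU, ← hL, Matrix.sub_mul, upLaplacian_mul_self, Matrix.smul_mul, Matrix.one_mul, sub_self]

lemma trace_upAdj (n k : ℕ) : (upAdj n k).trace = 0 :=
  Fintype.sum_eq_zero _ fun A => by simp [upAdj]

end Coboundary

section Orientation
variable {n q : ℕ}

@[simp] lemma bsgn_true : bsgn true = 1 := rfl

@[simp] lemma bsgn_false : bsgn false = -1 := rfl

lemma fetaUp_symm (τ τ' : FullOSimp n q) : fetaUp τ' τ = fetaUp τ τ' := by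
  unfold fetaUp
  by_cases h : τ.1.1 ≠ τ'.1.1 ∧ (τ.1.1 ∪ τ'.1.1).card = q + 1 + 1
  · have h' : τ'.1.1 ≠ τ.1.1 ∧ (τ'.1.1 ∪ τ.1.1).card = q + 1 + 1 := by
      rwa [union_comm, ne_comm]
    rw [dif_pos h, dif_pos h', mul_comm]
    congr 3 <;> exact Subtype.ext (union_comm _ _)
  · rw [dif_neg h, dif_neg (by rwa [union_comm, ne_comm])]

lemma fetaUp_eq_upAdj (τ τ' : FullOSimp n q) :
    (fetaUp τ τ' : ℂ) = upAdj n (q + 1) τ.1 τ'.1 * bsgn τ.2 * bsgn τ'.2 := by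
  unfold fetaUp upAdj
  by_cases h : τ.1.1 ≠ τ'.1.1 ∧ (τ.1.1 ∪ τ'.1.1).card = q + 1 + 1
  · rw [dif_pos h, if_pos h]
    simp only [fsgn, subset_union_left, subset_union_right, if_true, bsgn_true, incSign]
    push_cast
    ring
  · rw [dif_neg h, if_neg h]
    simp

lemma fdiscM_apply (τ τ' : FullOSimp n q) :
    fdiscM n q τ τ' = fc n q τ * fc n q τ' * fetaUp τ τ' := by
  rw [fdiscM, Matrix.mul_apply, Fintype.sum_eq_single (τ', τ)]
  · by_cases h : fetaUp τ' τ = 0 <;>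
      simp [Matrix.mul_apply, fdM, fshiftM, fdstarM, Fintype.sum_prod_type, ite_and, fetaUp_symm τ',
        h, mul_right_comm]
  · rintro ⟨σ, σ'⟩ hσ
    simp only [Matrix.mul_apply, fdM, fshiftM, fdstarM, Fintype.sum_prod_type, ite_and, mul_ite,
      ite_mul, zero_mul, mul_zero, sum_ite_eq, mem_univ, if_true]
    split_ifs <;> simp_all

lemma fdegX_eq (τ : FullOSimp n q) : (fdegX n q τ : ℂ) = n - (q + 1) := by
  have h := sum_faces_supset_one (q + 1) τ.1.2
  rw [sum_faces_ite_eq_sum_filter (q + 1 + 1) (τ.1.1 ⊆ ·) (fun _ => 1), sum_const,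
    nsmul_one] at h
  push_cast at h
  exact h

lemma fc_mul_fc (τ τ' : FullOSimp n q) :
    fc n q τ * fc n q τ' = (2 * (((q : ℂ) + 1) * ((n : ℂ) - q - 1)))⁻¹ := by
  have hnonneg : (0 : ℝ) ≤ 2 * (q + 1) * fdegX n q τ := by positivity
  have hdeg : fdegX n q τ' = fdegX n q τ := by
    exact_mod_cast (fdegX_eq τ').trans (fdegX_eq τ).symm
  rw [fc, fc, hdeg, ← mul_inv, ← Complex.ofReal_mul, Real.mul_self_sqrt hnonneg]
  push_cast
  rw [fdegX_eq]
  ring_nf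

noncomputable def orient (n q : ℕ) :
    ({A : Finset (Fin n) // A.card = q + 1} → ℂ) →ₗ[ℂ] (FullOSimp n q → ℂ) where
  toFun g τ := bsgn τ.2 * g τ.1
  map_add' g h := by ext; simp [mul_add]
  map_smul' c g := by ext; simp [mul_left_comm]

lemma orient_apply (g : {A : Finset (Fin n) // A.card = q + 1} → ℂ) (τ : FullOSimp n q) :
    orient n q g τ = bsgn τ.2 * g τ.1 := rfl

lemma orient_injective : Function.Injective (orient n q) := by
  intro g h hgh
  ext A
  simpa [orient_apply] using congrFun hgh (A, true)

lemma range_orient : LinearMap.range (orient n q) = fCSub n q := by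
  ext f
  constructor
  · rintro ⟨g, rfl⟩ ⟨A, b⟩
    cases b <;> simp [orient_apply, fbar]
  · intro hf
    refine ⟨fun A => f (A, true), funext fun ⟨A, b⟩ => ?_⟩
    cases b
    · simp [orient_apply, ← hf (A, true), fbar]
    · simp [orient_apply]

/-- The factor `((q+1)(n-q-1))⁻¹` is `2 * fc τ * fc τ'`, the `2` counting the two
orientations of each neighbouring face. -/
noncomputable def reducedDisc (n q : ℕ) :
    Module.End ℂ ({A : Finset (Fin n) // A.card = q + 1} → ℂ) :=
  Matrix.toLinAlgEquiv' ((((q : ℂ) + 1) * ((n : ℂ) - q - 1))⁻¹ • upAdj n (q + 1))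

lemma fdiscM_mulVec_orient (g : {A : Finset (Fin n) // A.card = q + 1} → ℂ) :
    fdiscM n q *ᵥ orient n q g = orient n q (reducedDisc n q g) := by
  ext τ
  simp only [reducedDisc, Matrix.toLinAlgEquiv'_apply, Matrix.mulVec, dotProduct, fdiscM_apply,
    fc_mul_fc, fetaUp_eq_upAdj, orient_apply, Fintype.sum_prod_type, Fintype.sum_bool,
    Matrix.smul_apply, smul_eq_mul, Finset.mul_sum]
  refine Finset.sum_congr rfl fun A _ => ?_
  simp only [bsgn]
  push_cast
  field_simp
  ring

lemma fEig_eq_map (n q : ℕ) (μ : ℂ) :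
    fEig n q μ = (Module.End.eigenspace (reducedDisc n q) μ).map (orient n q) := by
  rw [fEig, ← range_orient]
  exact eigenspace_inf_range_eq_map orient_injective (LinearMap.ext fdiscM_mulVec_orient) μ

lemma finrank_fEig (n q : ℕ) (μ : ℂ) : Module.finrank ℂ (fEig n q μ)
    = Module.finrank ℂ (Module.End.eigenspace (reducedDisc n q) μ) := by
  rw [fEig_eq_map]
  exact (Submodule.equivMapOfInjective _ orient_injective _).finrank_eq.symm

end Orientation

lemma natCast_sub_sub_one_ne_zero {n q : ℕ} (hq : q + 2 ≤ n) : (n : ℂ) - q - 1 ≠ 0 := by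
  rw [sub_sub, sub_ne_zero]
  norm_cast
  omega

lemma reducedDisc_quadratic {n q : ℕ} (hq : q + 2 ≤ n) :
    (reducedDisc n q - (1 / ((n : ℂ) - q - 1)) • 1)
      * (reducedDisc n q - (-(1 / ((q : ℂ) + 1))) • 1) = 0 := by
  have hq1 : (q : ℂ) + 1 ≠ 0 := by norm_cast
  have hnq := natCast_sub_sub_one_ne_zero hq
  set κ := (((q : ℂ) + 1) * ((n : ℂ) - q - 1))⁻¹ with hκ
  have ha : 1 / ((n : ℂ) - q - 1) = κ * ((q + 1 : ℕ) : ℂ) := by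
    rw [hκ]; push_cast; field_simp
  have hb : -(1 / ((q : ℂ) + 1)) = -(κ * ((n : ℂ) - (q + 1 : ℕ))) := by
    rw [hκ]; push_cast; field_simp; ring
  have key : (κ • upAdj n (q + 1) - (1 / ((n : ℂ) - q - 1)) • 1)
      * (κ • upAdj n (q + 1) - (-(1 / ((q : ℂ) + 1))) • 1) = 0 := by
    rw [ha, hb, neg_smul, sub_neg_eq_add, mul_smul, mul_smul, ← smul_sub, ← smul_add,
      smul_mul_smul_comm, upAdj_quadratic, smul_zero]
  simpa only [reducedDisc, map_zero, map_mul, map_sub, map_smul, map_one]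
    using congrArg Matrix.toLinAlgEquiv' key

lemma trace_reducedDisc (n q : ℕ) : LinearMap.trace ℂ _ (reducedDisc n q) = 0 := by
  rw [reducedDisc, map_smul, map_smul, smul_eq_zero]
  exact Or.inr ((Matrix.trace_toLin'_eq _).trans (trace_upAdj n (q + 1)))

lemma choose_pred_div_eq {n q : ℕ} (hq : q + 2 ≤ n) :
    ((n - 1).choose (q + 1) : ℂ) / ((n : ℂ) - q - 1) = (n - 1).choose q / ((q : ℂ) + 1) := by
  have hq1 : (q : ℂ) + 1 ≠ 0 := by norm_cast
  have hnq := natCast_sub_sub_one_ne_zero hq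
  have h := congrArg (Nat.cast : ℕ → ℂ) (Nat.choose_succ_right_eq (n - 1) q)
  push_cast [Nat.cast_sub (by omega : q ≤ n - 1), Nat.cast_sub (by omega : 1 ≤ n)] at h
  rw [div_eq_div_iff hnq hq1]
  linear_combination h

lemma one_div_sub_ne_neg_one_div {n q : ℕ} (hq : q + 2 ≤ n) :
    1 / ((n : ℂ) - q - 1) ≠ -(1 / ((q : ℂ) + 1)) := by
  have hq1 : (q : ℂ) + 1 ≠ 0 := by norm_cast
  have hnq := natCast_sub_sub_one_ne_zero hq
  intro h
  field_simp at h
  have hn : (n : ℂ) = 0 := by linear_combination h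
  norm_cast at hn
  omega

lemma finrank_faces {n : ℕ} (q : ℕ) (hn : 0 < n) :
    Module.finrank ℂ ({A : Finset (Fin n) // A.card = q + 1} → ℂ)
      = (n - 1).choose (q + 1) + (n - 1).choose q := by
  rw [Module.finrank_fintype_fun_eq_card, Fintype.card_finset_len, Fintype.card_fin]
  obtain ⟨m, rfl⟩ : ∃ m, n = m + 1 := ⟨n - 1, by omega⟩
  rw [Nat.add_sub_cancel, Nat.choose_succ_succ', add_comm]

/-- For the full `(n−1)`-dimensional simplex and `0 ≤ q ≤ n−2`, the
restriction of `D_q^up` to `C^q(K,ℂ)` has exactly the two eigenvalues `1/(n−q−1)`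
(with multiplicity `binom(n−1, q+1)`) and `−1/(q+1)` (with multiplicity `binom(n−1, q)`). -/
theorem full_simplex_disc_up_eigenvalues (n q : ℕ) (hq : q + 2 ≤ n) :
    (∀ μ : ℂ, fEig n q μ ≠ ⊥ ↔ (μ = 1 / ((n : ℂ) - q - 1) ∨ μ = -(1 / ((q : ℂ) + 1)))) ∧
    Module.finrank ℂ ↥(fEig n q (1 / ((n : ℂ) - q - 1))) = Nat.choose (n - 1) (q + 1) ∧
    Module.finrank ℂ ↥(fEig n q (-(1 / ((q : ℂ) + 1)))) = Nat.choose (n - 1) q := by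
  have hT := reducedDisc_quadratic hq
  have hab := one_div_sub_ne_neg_one_div hq
  have hdim := (finrank_faces q (by omega : 0 < n)).symm
  set a : ℂ := 1 / ((n : ℂ) - q - 1)
  set b : ℂ := -(1 / ((q : ℂ) + 1))
  have htr : LinearMap.trace ℂ _ (reducedDisc n q)
      = a * (n - 1).choose (q + 1) + b * (n - 1).choose q := by
    rw [trace_reducedDisc]
    linear_combination -choose_pred_div_eq hq
  have ha := finrank_eigenspace_of_quadratic hab hT hdim htr
  have hb := finrank_eigenspace_of_quadratic (m := (n - 1).choose q)
    (m' := (n - 1).choose (q + 1)) hab.symm (sub_smul_one_mul_comm.symm.trans hT)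
    (by omega) (by rw [htr]; ring)
  refine ⟨fun μ => ?_, (finrank_fEig n q a).trans ha, (finrank_fEig n q b).trans hb⟩
  rw [Ne, ← Submodule.finrank_eq_zero, finrank_fEig, Submodule.finrank_eq_zero]
  refine ⟨eq_or_eq_of_eigenspace_ne_bot hT, ?_⟩
  rintro (rfl | rfl) <;> rw [← Submodule.finrank_eq_zero]
  · rw [ha]; exact (Nat.choose_pos (by omega)).ne'
  · rw [hb]; exact (Nat.choose_pos (by omega)).ne'
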